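/- Let U ⊆ ℂ be open, φ : U → ℝ and t : U → ℂ smooth, and for λ ∈ ℂ, λ ≠ 0, define P(λ) = [[−(1/4)∂φ, λ·t·e^{−φ/2}], [e^{φ/2}, (1/4)∂φ]] and Q(λ) = [[(1/4)∂̄φ, e^{φ/2}], [−λ⁻¹·t̄·e^{−φ/2}, −(1/4)∂̄φ]]. If the zero-curvature equation ∂Q(λ₀) − ∂̄P(λ₀) + P(λ₀)Q(λ₀) − Q(λ₀)P(λ₀) = 0 holds on U for some λ₀ ≠ 0, then it holds on U for every λ ∈ ℂ with λ ≠ 0. -/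

import Mathlib

open Complex Matrix

/-- Wirtinger derivative ∂f(z) = (1/2)(Df(z)(1) − i·Df(z)(i)). -/
noncomputable def wD (f : ℂ → ℂ) (z : ℂ) : ℂ :=
  (1 / 2) * (fderiv ℝ f z 1 - Complex.I * fderiv ℝ f z Complex.I)

/-- Conjugate Wirtinger derivative ∂̄f(z) = (1/2)(Df(z)(1) + i·Df(z)(i)). -/
noncomputable def wDbar (f : ℂ → ℂ) (z : ℂ) : ℂ :=
  (1 / 2) * (fderiv ℝ f z 1 + Complex.I * fderiv ℝ f z Complex.I)

/-- Entrywise Wirtinger derivative of a matrix-valued function. -/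
noncomputable def mwD (F : ℂ → Matrix (Fin 2) (Fin 2) ℂ) (z : ℂ) : Matrix (Fin 2) (Fin 2) ℂ :=
  Matrix.of fun i j => wD (fun w => F w i j) z

/-- Entrywise conjugate Wirtinger derivative of a matrix-valued function. -/
noncomputable def mwDbar (F : ℂ → Matrix (Fin 2) (Fin 2) ℂ) (z : ℂ) : Matrix (Fin 2) (Fin 2) ℂ :=
  Matrix.of fun i j => wDbar (fun w => F w i j) z

/-- The `dz`-coefficient P(λ) of the cosh-Gordon connection. -/
noncomputable def coshP (lam : ℂ) (φ : ℂ → ℝ) (t : ℂ → ℂ) (z : ℂ) : Matrix (Fin 2) (Fin 2) ℂ :=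
  !![-(1 / 4) * wD (fun w => (φ w : ℂ)) z, lam * t z * (Real.exp (-φ z / 2) : ℝ);
     ((Real.exp (φ z / 2) : ℝ) : ℂ), (1 / 4) * wD (fun w => (φ w : ℂ)) z]

/-- The `dz̄`-coefficient Q(λ) of the cosh-Gordon connection. -/
noncomputable def coshQ (lam : ℂ) (φ : ℂ → ℝ) (t : ℂ → ℂ) (z : ℂ) : Matrix (Fin 2) (Fin 2) ℂ :=
  !![(1 / 4) * wDbar (fun w => (φ w : ℂ)) z, ((Real.exp (φ z / 2) : ℝ) : ℂ);
     -lam⁻¹ * (starRingEnd ℂ) (t z) * (Real.exp (-φ z / 2) : ℝ), -(1 / 4) * wDbar (fun w => (φ w : ℂ)) z]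

lemma fderiv_ofReal_comp (g : ℂ → ℝ) (z v : ℂ) (hg : DifferentiableAt ℝ g z) :
    fderiv ℝ (fun w => ((g w : ℝ) : ℂ)) z v = ((fderiv ℝ g z v : ℝ) : ℂ) := by
  have := (Complex.ofRealCLM.hasFDerivAt.comp z hg.hasFDerivAt).fderiv
  rw [show (fun w => ((g w : ℝ) : ℂ)) = (Complex.ofRealCLM ∘ g) from rfl, this]
  rfl

lemma wD_exp_comp (g : ℂ → ℝ) (z : ℂ) (hg : DifferentiableAt ℝ g z) :
    wD (fun w => ((Real.exp (g w) : ℝ) : ℂ)) z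
      = (Real.exp (g z) : ℂ) * wD (fun w => ((g w : ℝ) : ℂ)) z := by
  have h1 : ∀ v : ℂ, fderiv ℝ (fun w => ((Real.exp (g w) : ℝ) : ℂ)) z v
      = ((Real.exp (g z) * fderiv ℝ g z v : ℝ) : ℂ) := by
    intro v
    rw [fderiv_ofReal_comp (fun w => Real.exp (g w)) z v (hg.exp), _root_.fderiv_exp hg]
    simp
  unfold wD
  rw [h1 1, h1 Complex.I, fderiv_ofReal_comp g z 1 hg, fderiv_ofReal_comp g z Complex.I hg]
  push_cast
  ring

lemma wDbar_exp_comp (g : ℂ → ℝ) (z : ℂ) (hg : DifferentiableAt ℝ g z) :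
    wDbar (fun w => ((Real.exp (g w) : ℝ) : ℂ)) z
      = (Real.exp (g z) : ℂ) * wDbar (fun w => ((g w : ℝ) : ℂ)) z := by
  have h1 : ∀ v : ℂ, fderiv ℝ (fun w => ((Real.exp (g w) : ℝ) : ℂ)) z v
      = ((Real.exp (g z) * fderiv ℝ g z v : ℝ) : ℂ) := by
    intro v
    rw [fderiv_ofReal_comp (fun w => Real.exp (g w)) z v (hg.exp), _root_.fderiv_exp hg]
    simp
  unfold wDbar
  rw [h1 1, h1 Complex.I, fderiv_ofReal_comp g z 1 hg, fderiv_ofReal_comp g z Complex.I hg]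
  push_cast
  ring

lemma wD_const_mul (f : ℂ → ℂ) (c z : ℂ) (hf : DifferentiableAt ℝ f z) :
    wD (fun w => c * f w) z = c * wD f z := by
  unfold wD
  rw [fderiv_const_mul hf c]
  simp [smul_eq_mul]
  ring

lemma wDbar_const_mul (f : ℂ → ℂ) (c z : ℂ) (hf : DifferentiableAt ℝ f z) :
    wDbar (fun w => c * f w) z = c * wDbar f z := by
  unfold wDbar
  rw [fderiv_const_mul hf c]
  simp [smul_eq_mul]
  ring

lemma mwD_mk (f g h k : ℂ → ℂ) (z : ℂ) :
    mwD (fun w => !![f w, g w; h w, k w]) z = !![wD f z, wD g z; wD h z, wD k z] := by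
  ext i j
  fin_cases i <;> fin_cases j <;> rfl

lemma mwDbar_mk (f g h k : ℂ → ℂ) (z : ℂ) :
    mwDbar (fun w => !![f w, g w; h w, k w]) z = !![wDbar f z, wDbar g z; wDbar h z, wDbar k z] := by
  ext i j
  fin_cases i <;> fin_cases j <;> rfl

/-- If the zero-curvature equation for the cosh-Gordon λ-family of connections holds on U
for some λ₀ ≠ 0, then it holds on U for every λ ≠ 0. -/
theorem coshGordon_zero_curvature_all_lambda
    (U : Set ℂ) (hU : IsOpen U) (φ : ℂ → ℝ) (t : ℂ → ℂ)
    (hφ : ContDiffOn ℝ (⊤ : ℕ∞) φ U) (ht : ContDiffOn ℝ (⊤ : ℕ∞) t U)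
    (lam₀ : ℂ) (hlam₀ : lam₀ ≠ 0)
    (h : ∀ z ∈ U,
        mwD (coshQ lam₀ φ t) z - mwDbar (coshP lam₀ φ t) z
          + coshP lam₀ φ t z * coshQ lam₀ φ t z - coshQ lam₀ φ t z * coshP lam₀ φ t z = 0) :
    ∀ lam : ℂ, lam ≠ 0 → ∀ z ∈ U,
        mwD (coshQ lam φ t) z - mwDbar (coshP lam φ t) z
          + coshP lam φ t z * coshQ lam φ t z - coshQ lam φ t z * coshP lam φ t z = 0 := by
  intro lam hlam z hz
  have hzU : U ∈ nhds z := hU.mem_nhds hz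
  have hφd : DifferentiableAt ℝ φ z := (hφ.contDiffAt hzU).differentiableAt (by simp)
  have htd : DifferentiableAt ℝ t z := (ht.contDiffAt hzU).differentiableAt (by simp)
  have hφc : DifferentiableAt ℝ (fun w => ((φ w : ℝ) : ℂ)) z :=
    (Complex.ofRealCLM.hasFDerivAt.comp z hφd.hasFDerivAt).differentiableAt
  have hexpd : DifferentiableAt ℝ (fun w => Real.exp (-φ w / 2)) z := by fun_prop
  have hhalf : DifferentiableAt ℝ (fun w : ℂ => φ w / 2) z := by fun_prop
  have hemd : DifferentiableAt ℝ (fun w => ((Real.exp (-φ w / 2) : ℝ) : ℂ)) z :=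
    (Complex.ofRealCLM.hasFDerivAt.comp z hexpd.hasFDerivAt).differentiableAt
  have htc : DifferentiableAt ℝ (fun w => (starRingEnd ℂ) (t w)) z := htd.star
  -- abbreviations
  set a := wD (fun w => ((φ w : ℝ) : ℂ)) z with ha
  set b := wDbar (fun w => ((φ w : ℝ) : ℂ)) z with hb
  set ep : ℂ := ((Real.exp (φ z / 2) : ℝ) : ℂ) with hep
  set em : ℂ := ((Real.exp (-φ z / 2) : ℝ) : ℂ) with hem
  set q00 := wD (fun w => 1 / 4 * wDbar (fun u => ((φ u : ℝ) : ℂ)) w) z with hq00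
  set q11 := wD (fun w => -(1 / 4) * wDbar (fun u => ((φ u : ℝ) : ℂ)) w) z with hq11
  set p00 := wDbar (fun w => -(1 / 4) * wD (fun u => ((φ u : ℝ) : ℂ)) w) z with hp00
  set p11 := wDbar (fun w => 1 / 4 * wD (fun u => ((φ u : ℝ) : ℂ)) w) z with hp11
  set G := wDbar (fun w => t w * ((Real.exp (-φ w / 2) : ℝ) : ℂ)) z with hG
  set H := wD (fun w => -((starRingEnd ℂ) (t w) * ((Real.exp (-φ w / 2) : ℝ) : ℂ))) z with hH
  set T := t z with hT
  set Tc := (starRingEnd ℂ) (t z) with hTc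
  -- entry computations
  have E1 : wD (fun w => ((Real.exp (φ w / 2) : ℝ) : ℂ)) z = a / 2 * ep := by
    rw [wD_exp_comp (fun w => φ w / 2) z hhalf]
    rw [show (fun w => ((φ w / 2 : ℝ) : ℂ)) = fun w => (1 / 2 : ℂ) * ((φ w : ℝ) : ℂ) by
      funext w; push_cast; ring]
    rw [wD_const_mul _ _ _ hφc, hep, ← ha]
    ring
  have E2 : wDbar (fun w => ((Real.exp (φ w / 2) : ℝ) : ℂ)) z = b / 2 * ep := by
    rw [wDbar_exp_comp (fun w => φ w / 2) z hhalf]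
    rw [show (fun w => ((φ w / 2 : ℝ) : ℂ)) = fun w => (1 / 2 : ℂ) * ((φ w : ℝ) : ℂ) by
      funext w; push_cast; ring]
    rw [wDbar_const_mul _ _ _ hφc, hep, ← hb]
    ring
  clear_value a b ep em q00 q11 p00 p11 G H T Tc
  have key : ∀ μ : ℂ, μ ≠ 0 →
      mwD (coshQ μ φ t) z - mwDbar (coshP μ φ t) z
        + coshP μ φ t z * coshQ μ φ t z - coshQ μ φ t z * coshP μ φ t z
      = !![q00 - p00 - T * Tc * (em * em) - ep * ep,
           μ * (-G - b / 2 * T * em);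
           μ⁻¹ * (H - a / 2 * Tc * em),
           q11 - p11 + ep * ep + T * Tc * (em * em)] := by
    intro μ hμ
    have hmQ : mwD (coshQ μ φ t) z = !![q00, a / 2 * ep; μ⁻¹ * H, q11] := by
      have h1 := mwD_mk (fun w => 1 / 4 * wDbar (fun u => ((φ u : ℝ) : ℂ)) w)
        (fun w => ((Real.exp (φ w / 2) : ℝ) : ℂ))
        (fun w => -μ⁻¹ * (starRingEnd ℂ) (t w) * ((Real.exp (-φ w / 2) : ℝ) : ℂ))
        (fun w => -(1 / 4) * wDbar (fun u => ((φ u : ℝ) : ℂ)) w) z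
      have h2 : wD (fun w => -μ⁻¹ * (starRingEnd ℂ) (t w) * ((Real.exp (-φ w / 2) : ℝ) : ℂ)) z
          = μ⁻¹ * H := by
        rw [show (fun w => -μ⁻¹ * (starRingEnd ℂ) (t w) * ((Real.exp (-φ w / 2) : ℝ) : ℂ))
            = fun w => μ⁻¹ * -((starRingEnd ℂ) (t w) * ((Real.exp (-φ w / 2) : ℝ) : ℂ)) by
          funext w; ring]
        rw [wD_const_mul (f := fun w => -((starRingEnd ℂ) (t w) * ((Real.exp (-φ w / 2) : ℝ) : ℂ))) _ _ ((htc.mul hemd).neg), hH]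
      rw [show mwD (coshQ μ φ t) z = _ from h1, E1, h2, ← hq00, ← hq11]
    have hmP : mwDbar (coshP μ φ t) z = !![p00, μ * G; b / 2 * ep, p11] := by
      have h1 := mwDbar_mk (fun w => -(1 / 4) * wD (fun u => ((φ u : ℝ) : ℂ)) w)
        (fun w => μ * t w * ((Real.exp (-φ w / 2) : ℝ) : ℂ))
        (fun w => ((Real.exp (φ w / 2) : ℝ) : ℂ))
        (fun w => 1 / 4 * wD (fun u => ((φ u : ℝ) : ℂ)) w) z
      have h2 : wDbar (fun w => μ * t w * ((Real.exp (-φ w / 2) : ℝ) : ℂ)) z = μ * G := by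
        rw [show (fun w => μ * t w * ((Real.exp (-φ w / 2) : ℝ) : ℂ))
            = fun w => μ * (t w * ((Real.exp (-φ w / 2) : ℝ) : ℂ)) by funext w; ring]
        rw [wDbar_const_mul (f := fun w => t w * ((Real.exp (-φ w / 2) : ℝ) : ℂ)) _ _ (htd.mul hemd), hG]
      rw [show mwDbar (coshP μ φ t) z = _ from h1, E2, h2, ← hp00, ← hp11]
    have hPz : coshP μ φ t z = !![-(1 / 4) * a, μ * T * em; ep, 1 / 4 * a] := by
      rw [ha, hep, hem, hT]; rfl
    have hQz : coshQ μ φ t z = !![1 / 4 * b, ep; -μ⁻¹ * Tc * em, -(1 / 4) * b] := by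
      rw [hb, hep, hem, hTc]; rfl
    rw [hmQ, hmP, hPz, hQz, Matrix.mul_fin_two, Matrix.mul_fin_two]
    ext i j
    fin_cases i <;> fin_cases j <;>
      simp only [Fin.mk_zero, Fin.mk_one, Matrix.of_apply, Matrix.sub_apply, Matrix.add_apply,
        Matrix.cons_val', Matrix.cons_val_zero, Matrix.cons_val_one, Matrix.head_cons,
        Matrix.head_fin_const, Matrix.empty_val', Matrix.cons_val_fin_one]
    · linear_combination (-(T * Tc * (em * em))) * mul_inv_cancel₀ hμ
    · ring
    · ring
    · linear_combination (T * Tc * (em * em)) * mul_inv_cancel₀ hμ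
  have hm := (key lam₀ hlam₀).symm.trans (h z hz)
  have h00 : q00 - p00 - T * Tc * (em * em) - ep * ep = 0 := by
    have h' := congrFun (congrFun hm 0) 0
    simpa using h'
  have h01 : -G - b / 2 * T * em = 0 := by
    have h' := congrFun (congrFun hm 0) 1
    simp only [Matrix.cons_val', Matrix.cons_val_zero, Matrix.cons_val_one, Matrix.head_cons,
      Matrix.empty_val', Matrix.cons_val_fin_one, Matrix.zero_apply] at h'
    exact (mul_eq_zero.mp h').resolve_left hlam₀
  have h10 : H - a / 2 * Tc * em = 0 := by
    have h' := congrFun (congrFun hm 1) 0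
    simp only [Matrix.cons_val', Matrix.cons_val_zero, Matrix.cons_val_one, Matrix.head_cons,
      Matrix.head_fin_const, Matrix.empty_val', Matrix.cons_val_fin_one, Matrix.zero_apply] at h'
    exact (mul_eq_zero.mp h').resolve_left (inv_ne_zero hlam₀)
  have h11 : q11 - p11 + ep * ep + T * Tc * (em * em) = 0 := by
    have h' := congrFun (congrFun hm 1) 1
    simpa using h'
  rw [key lam hlam, h00, h01, h10, h11]
  ext i j
  fin_cases i <;> fin_cases j <;> simp
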